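/- arXiv:1409.0309 — 4 statements merged into one kernel-verified Lean document; each statement's English description precedes it below -/
import Mathlib

section
/- If a machine M is TA-compliant with an architecture (D, ↝), then for all domains u ∈ D and all sequences α, α' ∈ A* such that ta_u(α) = ta_u(α'), we have view_u(α) = view_u(α'). -/
structure Machine (S A D O : Type) where
  s0 : S
  step : S → A → S
  dom : A → D
  obs : D → S → O

namespace Machine

def run {S A D O : Type} (M : Machine S A D O) (α : List A) : S :=
  α.foldl M.step M.s0

end Machine
/-- Elements of a view: actions or (group) observations. -/
inductive VE (A O' : Type) where
  | act : A → VE A O'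
  | obs : O' → VE A O'

open Classical in
/-- Absorptive concatenation: `σ ∘ x` is `σ` if `x` equals the last element of `σ`,
and `σ ++ [x]` otherwise. -/
noncomputable def absorb {X : Type} (σ : List X) (x : X) : List X :=
  if σ.getLast? = some x then σ else σ ++ [x]

open Classical in
/-- View of a group `G`, computed on the reversed action sequence. -/
noncomputable def viewR {S A D O : Type} (M : Machine S A D O) (G : Set D) :
    List A → List (VE A (G → O))
  | [] => [VE.obs (fun u : G => M.obs u.1 M.s0)]
  | a :: ρ =>
    let o : VE A (G → O) := VE.obs (fun u : G => M.obs u.1 (M.run ((a :: ρ).reverse)))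
    if M.dom a ∈ G then viewR M G ρ ++ [VE.act a, o] else absorb (viewR M G ρ) o

/-- The view of group `G` of the action sequence `α`. -/
noncomputable def view {S A D O : Type} (M : Machine S A D O) (G : Set D) (α : List A) :
    List (VE A (G → O)) :=
  viewR M G α.reverse
/-- Values of the `ta` function: nested tuples of actions. -/
inductive TA (A : Type) where
  | eps : TA A
  | node : TA A → TA A → A → TA A

open Classical in
/-- `ta`, computed on the reversed action sequence. -/
noncomputable def taR {A D : Type} (P : D → D → Prop) (dm : A → D) :
    List A → D → TA A
  | [], _ => TA.eps
  | a :: ρ, u =>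
    if P (dm a) u then TA.node (taR P dm ρ u) (taR P dm ρ (dm a)) a
    else taR P dm ρ u

/-- `ta P dm α u` : maximal information domain `u` is permitted to have after `α`. -/
noncomputable def ta {A D : Type} (P : D → D → Prop) (dm : A → D) (α : List A) (u : D) :
    TA A :=
  taR P dm α.reverse u

/-- TA-compliance of a machine with the information-flow policy `P`. -/
def TACompliant {S A D O : Type} (M : Machine S A D O) (P : D → D → Prop) : Prop :=
  ∀ (u : D) (α α' : List A), ta P M.dom α u = ta P M.dom α' u →
    M.obs u (M.run α) = M.obs u (M.run α')

/-!
Domain `u`'s view of a run changes only at actions `a` with `dom a ↝ u`: for any other action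
`ta_u` is unchanged, so by compliance so is `u`'s observation, and the new observation is absorbed
(reflexivity of `↝` guarantees that `a` is not `u`'s own action). At an action with `dom a ↝ u`,
`ta_u` records `a` and `ta_u` of the prefix, so two runs with equal `ta_u` can be peeled back in
lockstep, compliance matching the observations appended at each step.
-/

section

variable {S A D O : Type} (M : Machine S A D O) {P : D → D → Prop}

lemma viewR_getLast? (G : Set D) (ρ : List A) :
    (viewR M G ρ).getLast? = some (VE.obs fun v : G => M.obs v.1 (M.run ρ.reverse)) := by
  cases ρ with
  | nil => rfl
  | cons a ρ =>
    simp only [viewR]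
    split
    · simp
    · unfold absorb
      split
      · assumption
      · simp

lemma taR_cons_of_not_flows (dm : A → D) {a : A} {u : D} (ρ : List A) (h : ¬ P (dm a) u) :
    taR P dm (a :: ρ) u = taR P dm ρ u :=
  if_neg h

lemma taR_cons_of_flows (dm : A → D) {a : A} {u : D} (ρ : List A) (h : P (dm a) u) :
    taR P dm (a :: ρ) u = .node (taR P dm ρ u) (taR P dm ρ (dm a)) a :=
  if_pos h

variable {M}

lemma TACompliant.obs_run_reverse_eq (hTA : TACompliant M P) {u : D} {ρ ρ' : List A}
    (h : taR P M.dom ρ u = taR P M.dom ρ' u) :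
    (fun v : ({u} : Set D) => M.obs v.1 (M.run ρ.reverse)) =
      fun v => M.obs v.1 (M.run ρ'.reverse) := by
  funext ⟨v, hv⟩
  obtain rfl : v = u := hv
  exact hTA v _ _ (by simpa [ta] using h)

lemma TACompliant.viewR_cons_of_not_flows (hrefl : ∀ u, P u u) (hTA : TACompliant M P)
    {u : D} {a : A} (ρ : List A) (h : ¬ P (M.dom a) u) :
    viewR M {u} (a :: ρ) = viewR M {u} ρ := by
  have hdom : M.dom a ∉ ({u} : Set D) := fun he => h (he ▸ hrefl u)
  have hobs := hTA.obs_run_reverse_eq (ρ := a :: ρ) (taR_cons_of_not_flows M.dom ρ h)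
  simp only [viewR, if_neg hdom, absorb, ← hobs, viewR_getLast?, if_true]

theorem TACompliant.viewR_eq_of_taR_eq (hrefl : ∀ u, P u u) (hTA : TACompliant M P) {u : D} :
    ∀ {ρ ρ' : List A}, taR P M.dom ρ u = taR P M.dom ρ' u → viewR M {u} ρ = viewR M {u} ρ'
  | [], [], _ => rfl
  | [], a' :: σ', h => by
    by_cases hP : P (M.dom a') u
    · cases h.trans (taR_cons_of_flows M.dom σ' hP)
    · rw [hTA.viewR_cons_of_not_flows hrefl σ' hP]
      exact hTA.viewR_eq_of_taR_eq hrefl (h.trans (taR_cons_of_not_flows M.dom σ' hP))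
  | a :: σ, ρ', h => by
    by_cases hP : P (M.dom a) u
    · match ρ', h with
      | [], h => cases (taR_cons_of_flows M.dom σ hP).symm.trans h
      | a' :: σ', h =>
        by_cases hP' : P (M.dom a') u
        · have hobs := hTA.obs_run_reverse_eq h
          rw [taR_cons_of_flows M.dom σ hP, taR_cons_of_flows M.dom σ' hP'] at h
          obtain ⟨hσ, -, rfl⟩ := TA.node.inj h
          simp only [viewR, hTA.viewR_eq_of_taR_eq hrefl hσ, hobs]
        · rw [hTA.viewR_cons_of_not_flows hrefl σ' hP']
          exact hTA.viewR_eq_of_taR_eq hrefl (h.trans (taR_cons_of_not_flows M.dom σ' hP'))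
    · rw [hTA.viewR_cons_of_not_flows hrefl σ hP]
      exact hTA.viewR_eq_of_taR_eq hrefl ((taR_cons_of_not_flows M.dom σ hP).symm.trans h)
termination_by ρ ρ' => ρ.length + ρ'.length

end

/-- TA-compliance implies equality of `ta` values yields equality
of views. -/
theorem statement0 {S A D O : Type} (M : Machine S A D O) (P : D → D → Prop)
    (hrefl : ∀ u, P u u) (hTA : TACompliant M P) :
    ∀ (u : D) (α α' : List A),
      ta P M.dom α u = ta P M.dom α' u → view M {u} α = view M {u} α' :=
  fun _ _ _ h => hTA.viewR_eq_of_taR_eq hrefl h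
end

section
/- Let r : D₁ → D₂ be surjective and let M be a machine with domains D₁. Then for all interpretations π, all sequences α ∈ A*, and all formulas φ for the domains D₂ (not containing distributed knowledge operators), we have r(M),π,α ⊨ φ if and only if M,π,α ⊨ r⁻¹(φ). -/
/-- Formulas of the epistemic logic (without distributed knowledge). -/
inductive Formula (PC D : Type) where
  | tru : Formula PC D
  | atom : PC → Formula PC D
  | neg : Formula PC D → Formula PC D
  | conj : Formula PC D → Formula PC D → Formula PC D
  | know : Set D → Formula PC D → Formula PC D

/-- Satisfaction relation `M,π,α ⊨ φ`. -/
def sat {S A D O PC : Type} (M : Machine S A D O) (π : PC → Set (List A)) :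
    List A → Formula PC D → Prop
  | _, .tru => True
  | α, .atom p => α ∈ π p
  | α, .neg φ => ¬ sat M π α φ
  | α, .conj φ ψ => sat M π α φ ∧ sat M π α ψ
  | α, .know G φ => ∀ α', view M G α' = view M G α → sat M π α' φ
open Classical in
/-- The machine `r(M)`: same states and transitions, domains `D₂`, domain
function `r ∘ dom`, and observation of `u ∈ D₂` the tuple of observations of
the domains in `r⁻¹(u)` (encoded as a partial function on `D₁`). -/
noncomputable def rMachine {S A D₁ D₂ O : Type} (M : Machine S A D₁ O) (r : D₁ → D₂) :
    Machine S A D₂ (D₁ → Option O) where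
  s0 := M.s0
  step := M.step
  dom := r ∘ M.dom
  obs := fun u s v => if r v = u then some (M.obs v s) else none

/-- `r⁻¹(φ)`: replace every group `G` in a knowledge operator by `r⁻¹(G)`. -/
def rinv {PC D₁ D₂ : Type} (r : D₁ → D₂) : Formula PC D₂ → Formula PC D₁
  | .tru => .tru
  | .atom p => .atom p
  | .neg φ => .neg (rinv r φ)
  | .conj φ ψ => .conj (rinv r φ) (rinv r ψ)
  | .know G φ => .know (r ⁻¹' G) (rinv r φ)

/-!
The view of a group `G` in `r(M)` is the view of `r⁻¹(G)` in `M` with every observation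
re-encoded injectively, so the two views identify the same action sequences; the theorem then
follows by induction on the formula.
-/

def VE.mapObs {A O O' : Type} (f : O → O') : VE A O → VE A O'
  | .act a => .act a
  | .obs o => .obs (f o)

theorem VE.mapObs_injective {A O O' : Type} {f : O → O'} (hf : Function.Injective f) :
    Function.Injective (VE.mapObs (A := A) f) := by
  rintro (a | o) (b | p) h <;> simp only [VE.mapObs, VE.act.injEq, VE.obs.injEq, reduceCtorEq] at h
  · rw [h]
  · rw [hf h]

theorem absorb_map {X Y : Type} {F : X → Y} (hF : Function.Injective F) (σ : List X) (x : X) :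
    absorb (σ.map F) (F x) = (absorb σ x).map F := by
  have hlast : (σ.map F).getLast? = some (F x) ↔ σ.getLast? = some x := by
    rw [List.getLast?_map, ← Option.map_some, (Option.map_injective hF).eq_iff]
  unfold absorb
  by_cases h : σ.getLast? = some x
  · rw [if_pos (hlast.mpr h), if_pos h]
  · rw [if_neg (mt hlast.mp h), if_neg h, List.map_append, List.map_singleton]

section rMachine

variable {S A D₁ D₂ O : Type} (M : Machine S A D₁ O) (r : D₁ → D₂) (G : Set D₂)

open Classical in
noncomputable def obsEnc (g : r ⁻¹' G → O) : G → D₁ → Option O :=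
  fun u v => if h : r v = u.1 then some (g ⟨v, show r v ∈ G from h ▸ u.2⟩) else none

theorem obsEnc_injective : Function.Injective (obsEnc (O := O) r G) := by
  intro g₁ g₂ h
  funext v
  simpa [obsEnc] using congrFun (congrFun h ⟨r v.1, v.2⟩) v.1

theorem rMachine_obs_eq_obsEnc (s : S) :
    (fun u : G => (rMachine M r).obs u.1 s) = obsEnc r G (fun v : r ⁻¹' G => M.obs v.1 s) := by
  funext u v
  by_cases h : r v = u.1 <;> simp [rMachine, obsEnc, h]

theorem rMachine_run (ρ : List A) : (rMachine M r).run ρ = M.run ρ := rfl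

theorem viewR_rMachine (ρ : List A) :
    viewR (rMachine M r) G ρ = (viewR M (r ⁻¹' G) ρ).map (VE.mapObs (obsEnc r G)) := by
  induction ρ with
  | nil => simp only [viewR, rMachine_obs_eq_obsEnc, List.map_singleton, VE.mapObs]; rfl
  | cons a ρ ih =>
    simp only [viewR, rMachine_run, rMachine_obs_eq_obsEnc, ih]
    by_cases h : M.dom a ∈ r ⁻¹' G
    · rw [if_pos (show (rMachine M r).dom a ∈ G from h), if_pos h]
      simp [VE.mapObs]
    · rw [if_neg (show (rMachine M r).dom a ∉ G from h), if_neg h]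
      exact absorb_map (VE.mapObs_injective (obsEnc_injective r G)) _ (.obs _)

theorem view_rMachine_eq_iff (α β : List A) :
    view (rMachine M r) G α = view (rMachine M r) G β ↔
      view M (r ⁻¹' G) α = view M (r ⁻¹' G) β := by
  simp only [view, viewR_rMachine]
  exact (List.map_injective_iff.mpr (VE.mapObs_injective (obsEnc_injective r G))).eq_iff

end rMachine

theorem statement2_general {S A D₁ D₂ O PC : Type} (r : D₁ → D₂)
    (M : Machine S A D₁ O)
    (π : PC → Set (List A)) (α : List A) (φ : Formula PC D₂) :
    sat (rMachine M r) π α φ ↔ sat M π α (rinv r φ) := by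
  induction φ generalizing α with
  | tru | atom p => rfl
  | neg φ ih => exact not_congr (ih α)
  | conj φ ψ ih₁ ih₂ => exact and_congr (ih₁ α) (ih₂ α)
  | know G φ ih =>
    exact forall_congr' fun α' => imp_congr (view_rMachine_eq_iff M r G α' α) (ih α')

/-- `r(M),π,α ⊨ φ` iff `M,π,α ⊨ r⁻¹(φ)`. -/
theorem statement2 {S A D₁ D₂ O PC : Type} (r : D₁ → D₂)
    (hr : Function.Surjective r) (M : Machine S A D₁ O)
    (π : PC → Set (List A)) (α : List A) (φ : Formula PC D₂) :
    sat (rMachine M r) π α φ ↔ sat M π α (rinv r φ) :=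
  statement2_general r M π α φ
end

section
/- Let A₁ = (D, ↝₁) be an architecture, and let A₂ = (D, ↝₂) be the extended architecture such that (u,v,f) ∈ ↝₂ if and only if f = ⊤ and (u,v) ∈ ↝₁. Let M be a machine with domains D, actions A and domain function dom, and let ℐ = (A, dom, 𝕀) be any interpretation for A₂ with this set of actions and domain function. Then M is TA-compliant with A₁ if and only if M is FTA-compliant with (A₂, ℐ). -/
/-- An extended architecture: `edge u v = none` means no edge, `edge u v = some none`
means an edge labelled `⊤`, and `edge u v = some (some f)` means an edge labelled by
the filter-function name `f`.  There is at most one label per ordered pair by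
construction, and the relation is reflexive with label `⊤`. -/
structure ExtArch (D L : Type) where
  edge : D → D → Option (Option L)
  refl : ∀ u, edge u u = some none

/-- Values of the `tf` function and of filter-function interpretations:
`eps` is the empty value ε, `base v` an arbitrary basic value, and
`pair σ a` the pair `(σ, a)` of a `tf` value and an action. -/
inductive TFVal (A V : Type) where
  | eps : TFVal A V
  | base : V → TFVal A V
  | pair : List (TFVal A V) → A → TFVal A V

/-- `σ ⌢ x`: appends `x` as a single new last element unless `x = ε`. -/
def snoc' {A V : Type} (σ : List (TFVal A V)) : TFVal A V → List (TFVal A V)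
  | .eps => σ
  | x => σ ++ [x]

/-- `tf`, computed on the reversed action sequence. -/
def tfR {A D L V : Type} (Arch : ExtArch D L) (dm : A → D)
    (I : L → List A → A → TFVal A V) : List A → D → List (TFVal A V)
  | [], _ => []
  | a :: ρ, u =>
    match Arch.edge (dm a) u with
    | none => tfR Arch dm I ρ u
    | some none => tfR Arch dm I ρ u ++ [TFVal.pair (tfR Arch dm I ρ (dm a)) a]
    | some (some f) => snoc' (tfR Arch dm I ρ u) (I f ρ.reverse a)

/-- `tf Arch dm I α u` : maximal information domain `u` is permitted to have after `α`. -/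
def tf {A D L V : Type} (Arch : ExtArch D L) (dm : A → D)
    (I : L → List A → A → TFVal A V) (α : List A) (u : D) : List (TFVal A V) :=
  tfR Arch dm I α.reverse u

/-- `inF Arch dm I α a u` : the information `in_{dom(a),u}(α, a)` transmitted to `u`
when action `a` is performed after `α`. -/
def inF {A D L V : Type} (Arch : ExtArch D L) (dm : A → D)
    (I : L → List A → A → TFVal A V) (α : List A) (a : A) (u : D) : TFVal A V :=
  match Arch.edge (dm a) u with
  | none => TFVal.eps
  | some none => TFVal.pair (tf Arch dm I α (dm a)) a
  | some (some f) => I f α a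
/-- FTA-compliance of a machine with an interpreted extended architecture
(whose actions, domains and domain function are those of the machine). -/
def FTACompliant {S A D O L V : Type} (M : Machine S A D O) (Arch : ExtArch D L)
    (I : L → List A → A → TFVal A V) : Prop :=
  ∀ (u : D) (α α' : List A), tf Arch M.dom I α u = tf Arch M.dom I α' u →
    M.obs u (M.run α) = M.obs u (M.run α')

open Classical in
/-- The extended architecture obtained from a reflexive information-flow policy
`P` by labelling every permitted flow with `⊤`. -/
noncomputable def liftArch {D L : Type} (P : D → D → Prop) (hrefl : ∀ u, P u u) :
    ExtArch D L where
  edge u v := if P u v then some none else none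
  refl u := if_pos (hrefl u)

/- Over an all-`⊤` architecture every `in` value is a pair `(tf, a)`, so `tf` is `ta` with each
node `(σ, τ, a)` unfolded into `σ ⌢ (τ, a)`; this unfolding is injective, hence `tf` and `ta`
identify the same pairs of action sequences. -/

namespace TA

variable {A : Type}

def toTF {V : Type} : TA A → List (TFVal A V)
  | eps => []
  | node σ τ a => σ.toTF ++ [TFVal.pair τ.toTF a]

theorem toTF_injective (V : Type) : Function.Injective (toTF (A := A) (V := V)) := by
  intro σ
  induction σ with
  | eps =>
    rintro (_ | _) h
    · rfl
    · simp [toTF] at h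
  | node σ₁ τ₁ a ih₁ ih₂ =>
    rintro (_ | ⟨σ₂, τ₂, b⟩) h
    · simp [toTF] at h
    · obtain ⟨hσ, hτ, rfl⟩ : σ₁.toTF = σ₂.toTF ∧ τ₁.toTF = τ₂.toTF ∧ a = b := by
        simpa [toTF] using h
      rw [ih₁ hσ, ih₂ hτ]

end TA

open Classical in
theorem liftArch_edge {D L : Type} (P : D → D → Prop) (hrefl : ∀ u, P u u) (u v : D) :
    (liftArch (L := L) P hrefl).edge u v = if P u v then some none else none :=
  rfl

theorem tfR_liftArch {A D L V : Type} (P : D → D → Prop) (hrefl : ∀ u, P u u)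
    (dm : A → D) (I : L → List A → A → TFVal A V) (ρ : List A) (u : D) :
    tfR (liftArch P hrefl) dm I ρ u = (taR P dm ρ u).toTF := by
  induction ρ generalizing u with
  | nil => rfl
  | cons a ρ ih =>
    by_cases h : P (dm a) u
    · simp only [tfR, taR, liftArch_edge, if_pos h, ih, TA.toTF]
    · simp only [tfR, taR, liftArch_edge, if_neg h, ih]

theorem tf_liftArch_eq_iff {A D L V : Type} (P : D → D → Prop) (hrefl : ∀ u, P u u)
    (dm : A → D) (I : L → List A → A → TFVal A V) (α α' : List A) (u : D) :
    tf (liftArch P hrefl) dm I α u = tf (liftArch P hrefl) dm I α' u ↔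
      ta P dm α u = ta P dm α' u := by
  simp only [tf, ta, tfR_liftArch]
  exact (TA.toTF_injective V).eq_iff

/-- `M` is TA-compliant with `(D, ↝₁)` iff `M` is FTA-compliant
with the corresponding all-`⊤` extended architecture under any interpretation. -/
theorem statement6 {S A D O L V : Type} (M : Machine S A D O)
    (P : D → D → Prop) (hrefl : ∀ u, P u u)
    (I : L → List A → A → TFVal A V) :
    TACompliant M P ↔ FTACompliant M (liftArch P hrefl) I := by
  simp only [TACompliant, FTACompliant, tf_liftArch_eq_iff]
end

section
/- If messages are source-identifying with respect to r, and r satisfies conditions S1, S2 and S5, then r satisfies condition S4. -/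
/-- Condition S1: `r` is onto `D₂` and `dm₂ = r ∘ dm₁`. -/
def CondS1 {A D₁ D₂ : Type} (dm₁ : A → D₁) (dm₂ : A → D₂) (r : D₁ → D₂) : Prop :=
  Function.Surjective r ∧ dm₂ = r ∘ dm₁

/-- Condition S2: `⊤`-edges are mapped to `⊤`-edges. -/
def CondS2 {D₁ D₂ L₁ L₂ : Type} (A₁ : ExtArch D₁ L₁) (A₂ : ExtArch D₂ L₂)
    (r : D₁ → D₂) : Prop :=
  ∀ u v : D₁, A₁.edge u v = some none → A₂.edge (r u) (r v) = some none

/-- Condition S3. -/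
def CondS3 {A D₁ D₂ L₁ L₂ V₁ V₂ : Type} (A₁ : ExtArch D₁ L₁) (dm₁ : A → D₁)
    (I₁ : L₁ → List A → A → TFVal A V₁) (A₂ : ExtArch D₂ L₂)
    (I₂ : L₂ → List A → A → TFVal A V₂) (r : D₁ → D₂) : Prop :=
  ∀ (u v : D₁) (f₁ : L₁), A₁.edge u v = some (some f₁) →
    ∃ f₂ : Option L₂, A₂.edge (r u) (r v) = some f₂ ∧
      (f₂ = none ∨ ∃ g₂ : L₂, f₂ = some g₂ ∧
        ∀ (α : List A) (a : A), dm₁ a = u →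
          I₂ g₂ α a = TFVal.eps → I₁ f₁ α a = TFVal.eps)

/-- Condition S4. -/
def CondS4 {A D₁ D₂ L₁ L₂ V₁ V₂ : Type} (A₁ : ExtArch D₁ L₁) (dm₁ : A → D₁)
    (I₁ : L₁ → List A → A → TFVal A V₁) (A₂ : ExtArch D₂ L₂) (dm₂ : A → D₂)
    (I₂ : L₂ → List A → A → TFVal A V₂) (r : D₁ → D₂) : Prop :=
  ∀ (u : D₁) (a b : A) (f₂ g₂ : L₂),
    A₂.edge (dm₂ a) (r u) = some (some f₂) →
    A₂.edge (dm₂ b) (r u) = some (some g₂) →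
    -- (a)
    ((A₁.edge (dm₁ a) u = none ∧ A₁.edge (dm₁ b) u = none) ∨
    -- (b)
    (∃ f₁ : L₁, A₁.edge (dm₁ a) u = some (some f₁) ∧ A₁.edge (dm₁ b) u = none ∧
      ∀ (α β : List A), I₂ f₂ α a = I₂ g₂ β b → I₂ f₂ α a ≠ TFVal.eps →
        I₁ f₁ α a = TFVal.eps) ∨
    -- (c)
    (A₁.edge (dm₁ a) u = none ∧ ∃ g₁ : L₁, A₁.edge (dm₁ b) u = some (some g₁) ∧
      ∀ (α β : List A), I₂ f₂ α a = I₂ g₂ β b → I₂ f₂ α a ≠ TFVal.eps →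
        I₁ g₁ β b = TFVal.eps) ∨
    -- (d)
    (∃ f₁ g₁ : L₁, A₁.edge (dm₁ a) u = some (some f₁) ∧
      A₁.edge (dm₁ b) u = some (some g₁) ∧
      ∀ (α β : List A), I₂ f₂ α a = I₂ g₂ β b → I₂ f₂ α a ≠ TFVal.eps →
        I₁ f₁ α a = I₁ g₁ β b))

/-- Condition S5. -/
def CondS5 {A D₁ D₂ L₁ L₂ V₁ V₂ : Type} (A₁ : ExtArch D₁ L₁) (dm₁ : A → D₁)
    (I₁ : L₁ → List A → A → TFVal A V₁) (A₂ : ExtArch D₂ L₂) (dm₂ : A → D₂)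
    (I₂ : L₂ → List A → A → TFVal A V₂) (r : D₁ → D₂) : Prop :=
  ∀ (α β : List A) (a b : A) (v : D₁) (f₁ : L₁) (f₂ : L₂),
    dm₁ a = dm₁ b →
    A₁.edge (dm₁ a) v = some (some f₁) →
    A₂.edge (dm₂ a) (r v) = some (some f₂) →
    I₂ f₂ α a = I₂ f₂ β b → I₂ f₂ α a ≠ TFVal.eps →
    I₁ f₁ α a = I₁ f₁ β b

/-- Messages are source-identifying with respect to `r`: some function `𝒮`
recovers the (concrete) source domain of every non-`ε` filtered message. -/
def SourceIdentifying {A D₁ D₂ L₂ V₂ : Type} (dm₁ : A → D₁)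
    (A₂ : ExtArch D₂ L₂) (I₂ : L₂ → List A → A → TFVal A V₂) (r : D₁ → D₂) :
    Prop :=
  ∃ Srce : TFVal A V₂ → D₁,
    ∀ (α : List A) (a : A) (w : D₂) (f₂ : L₂),
      A₂.edge (r (dm₁ a)) w = some (some f₂) → I₂ f₂ α a ≠ TFVal.eps →
        Srce (I₂ f₂ α a) = dm₁ a

/-! Source identification forces two actions whose abstract messages to `r u` coincide (and are
not `ε`) to have the same concrete domain. Hence in cases (b) and (c) of S4 the premise never
holds, and in case (d) both concrete and both abstract edges coincide, so S5 applies; S2 excludes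
`⊤`-labelled concrete edges into `u`. -/

section

variable {A D₁ D₂ L₁ L₂ V₂ : Type}

theorem CondS2.edge_ne_top {A₁ : ExtArch D₁ L₁} {A₂ : ExtArch D₂ L₂} {r : D₁ → D₂}
    (h2 : CondS2 A₁ A₂ r) {u v : D₁} {f : L₂} (hf : A₂.edge (r u) (r v) = some (some f)) :
    A₁.edge u v ≠ some none := fun h => by
  simpa [hf] using h2 u v h

theorem SourceIdentifying.dom_eq {dm₁ : A → D₁} {A₂ : ExtArch D₂ L₂}
    {I₂ : L₂ → List A → A → TFVal A V₂} {r : D₁ → D₂} (hsi : SourceIdentifying dm₁ A₂ I₂ r)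
    {a b : A} {w : D₂} {f g : L₂} (ha : A₂.edge (r (dm₁ a)) w = some (some f))
    (hb : A₂.edge (r (dm₁ b)) w = some (some g)) {α β : List A}
    (heq : I₂ f α a = I₂ g β b) (hne : I₂ f α a ≠ .eps) : dm₁ a = dm₁ b := by
  obtain ⟨src, hsrc⟩ := hsi
  rw [← hsrc α a w f ha hne, ← hsrc β b w g hb (heq ▸ hne), heq]

end

/-- if messages are source-identifying with respect to `r` and
`r` satisfies S1, S2 and S5, then `r` satisfies S4. -/
theorem statement17 {A D₁ D₂ L₁ L₂ V₁ V₂ : Type}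
    (A₁ : ExtArch D₁ L₁) (dm₁ : A → D₁) (I₁ : L₁ → List A → A → TFVal A V₁)
    (A₂ : ExtArch D₂ L₂) (dm₂ : A → D₂) (I₂ : L₂ → List A → A → TFVal A V₂)
    (r : D₁ → D₂)
    (hsi : SourceIdentifying dm₁ A₂ I₂ r)
    (h1 : CondS1 dm₁ dm₂ r) (h2 : CondS2 A₁ A₂ r)
    (h5 : CondS5 A₁ dm₁ I₁ A₂ dm₂ I₂ r) :
    CondS4 A₁ dm₁ I₁ A₂ dm₂ I₂ r := by
  obtain ⟨-, rfl⟩ := h1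
  intro u a b f₂ g₂ hfa hfb
  simp only [Function.comp_apply] at hfa hfb
  have hab : ∀ α β, I₂ f₂ α a = I₂ g₂ β b → I₂ f₂ α a ≠ .eps → dm₁ a = dm₁ b :=
    fun _ _ => hsi.dom_eq hfa hfb
  rcases ha : A₁.edge (dm₁ a) u with _ | _ | f₁ <;>
    rcases hb : A₁.edge (dm₁ b) u with _ | _ | g₁
  case none.none => exact Or.inl ⟨rfl, rfl⟩
  case none.some.some =>
    refine Or.inr <| Or.inr <| Or.inl ⟨rfl, g₁, rfl, fun α β heq hne => ?_⟩
    rw [hab α β heq hne, hb] at ha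
    cases ha
  case some.some.none =>
    refine Or.inr <| Or.inl ⟨f₁, rfl, rfl, fun α β heq hne => ?_⟩
    rw [hab α β heq hne, hb] at ha
    cases ha
  case some.some.some.some =>
    refine Or.inr <| Or.inr <| Or.inr ⟨f₁, g₁, rfl, rfl, fun α β heq hne => ?_⟩
    have hdm := hab α β heq hne
    obtain rfl : f₁ = g₁ := by simpa [hdm, hb] using ha.symm
    obtain rfl : f₂ = g₂ := by simpa [hdm, hfb] using hfa.symm
    exact h5 α β a b u f₁ f₂ hdm ha hfa heq hne
  all_goals first
    | exact absurd ha (h2.edge_ne_top hfa)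
    | exact absurd hb (h2.edge_ne_top hfb)
end
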